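/- Let H be a real Hilbert space compactly embedded into L²(Ω), G ⊂ H a closed subspace, ρ̃ ∈ L^∞(Ω), and λ⁻¹ < 0 a negative real number. Assume that for all u ∈ G with ‖u‖_H = 1 we have λ⁻¹ < ∫_Ω ρ̃ u² dx. Then the strict inequality persists at the infimum: λ⁻¹ < inf{∫_Ω ρ̃ u² dx : u ∈ G, ‖u‖_H = 1}. -/

import Mathlib

/-!
By Riesz, the weak topology of a real Hilbert space is the weak-* topology of its dual, so by
Banach–Alaoglu its closed unit ball is weakly compact; a compact operator maps it continuously
onto a norm-compact set. Hence `u ↦ ∫ ρ̃ (ι u)²` attains its minimum `m` on the unit ball of `G`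
at some `u₀`. If `m < 0` then `u₀ ≠ 0`, and by 2-homogeneity `u₀ / ‖u₀‖` gives the value
`m / ‖u₀‖² ≤ m`, so the hypothesis on the unit sphere yields `λ⁻¹ < m`; if `m ≥ 0` we use
`λ⁻¹ < 0`. Either way `λ⁻¹ < min m 0`, which bounds the infimum from below, also when the
unit sphere of `G` is empty and `sInf ∅ = 0`.
-/

open MeasureTheory Metric InnerProductSpace

section WeakCompactness

theorem continuous_of_mapsTo_isCompact_of_forall_dual {𝕜 X E : Type*} [RCLike 𝕜]
    [TopologicalSpace X] [NormedAddCommGroup E] [NormedSpace 𝕜 E] {f : X → E} {K : Set E}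
    (hK : IsCompact K) (hfK : ∀ x, f x ∈ K)
    (hf : ∀ ψ : StrongDual 𝕜 E, Continuous fun x => ψ (f x)) : Continuous f := by
  have : CompactSpace K := isCompact_iff_compactSpace.mp hK
  let g : K → StrongDual 𝕜 E → 𝕜 := fun k ψ => ψ k
  have hg : Continuous g := continuous_pi fun ψ => ψ.continuous.comp continuous_subtype_val
  have hg_inj : Function.Injective g := fun a b hab => Subtype.ext <| sub_eq_zero.mp <|
    SeparatingDual.eq_zero_of_forall_dual_eq_zero (R := 𝕜) fun ψ => by
      simp [map_sub, show ψ a = ψ b from congrFun hab ψ]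
  have hf' : Continuous fun x => (⟨f x, hfK x⟩ : K) :=
    (hg.isClosedEmbedding hg_inj).isInducing.continuous_iff.mpr (continuous_pi hf)
  exact continuous_subtype_val.comp hf'

variable {H E : Type*} [NormedAddCommGroup H] [InnerProductSpace ℝ H] [CompleteSpace H]
  [NormedAddCommGroup E] [NormedSpace ℝ E] {T : H →L[ℝ] E}

theorem IsCompactOperator.continuousOn_toDual_symm (hT : IsCompactOperator T) (r : ℝ) :
    ContinuousOn (fun φ : WeakDual ℝ H => T ((toDual ℝ H).symm (WeakDual.toStrongDual φ)))
      (WeakDual.toStrongDual ⁻¹' closedBall 0 r) := by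
  obtain ⟨K, hK, hTK⟩ := IsCompactOperator.image_closedBall_subset_compact
    (f := (T : H →ₗ[ℝ] E)) hT r
  rw [continuousOn_iff_continuous_domRestrict]
  refine continuous_of_mapsTo_isCompact_of_forall_dual (𝕜 := ℝ) hK
    (fun φ => hTK ⟨_, by simpa only [Set.mem_preimage, mem_closedBall_zero_iff,
      LinearIsometryEquiv.norm_map] using φ.2, rfl⟩) fun ψ => ?_
  have hψ : ∀ φ : WeakDual ℝ H,
      ψ (T ((toDual ℝ H).symm (WeakDual.toStrongDual φ))) = φ ((toDual ℝ H).symm (ψ ∘L T)) :=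
    fun φ => by
      rw [← ContinuousLinearMap.comp_apply, ← toDual_symm_apply, real_inner_comm,
        toDual_symm_apply]
      rfl
  simp only [Set.domRestrict_apply, hψ]
  exact (WeakDual.eval_continuous _).comp continuous_subtype_val

theorem IsCompactOperator.exists_isMinOn_closedBall (hT : IsCompactOperator T) {q : E → ℝ}
    (hq : Continuous q) {r : ℝ} (hr : 0 ≤ r) :
    ∃ u ∈ closedBall (0 : H) r, IsMinOn (q ∘ T) (closedBall 0 r) u := by
  let A : Set (WeakDual ℝ H) := WeakDual.toStrongDual ⁻¹' closedBall 0 r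
  have hA : IsCompact A := WeakDual.isCompact_closedBall 0 r
  have hA0 : A.Nonempty := ⟨0, by simpa [A] using hr⟩
  obtain ⟨φ₀, hφ₀, hmin⟩ :=
    hA.exists_isMinOn hA0 (hq.comp_continuousOn (hT.continuousOn_toDual_symm r))
  refine ⟨(toDual ℝ H).symm (WeakDual.toStrongDual φ₀),
    by simpa [A, mem_closedBall_zero_iff] using hφ₀, fun u hu => ?_⟩
  simpa using hmin (a := StrongDual.toWeakDual (toDual ℝ H u)) (by simpa [A] using hu)

end WeakCompactness

section Homogeneous

variable {F : Type*} [NormedAddCommGroup F] [NormedSpace ℝ F]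

theorem lt_of_isMinOn_closedBall_of_homogeneous {g : F → ℝ}
    (hg : ∀ (c : ℝ) v, g (c • v) = c ^ 2 * g v) {u₀ : F} (hu₀ : u₀ ∈ closedBall 0 1)
    (hmin : IsMinOn g (closedBall 0 1) u₀) {a : ℝ}
    (ha : a < 0) (h : ∀ v, ‖v‖ = 1 → a < g v) : a < g u₀ := by
  rcases le_or_gt 0 (g u₀) with hm | hm
  · exact ha.trans_le hm
  have hu₀0 : u₀ ≠ 0 := by
    rintro rfl
    have : g 0 = 0 := by simpa using hg 0 0
    linarith
  have hnorm : 0 < ‖u₀‖ := norm_pos_iff.mpr hu₀0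
  have hinv : 1 ≤ ‖u₀‖⁻¹ ^ 2 :=
    one_le_pow₀ ((one_le_inv₀ hnorm).mpr (by simpa using hu₀))
  calc a < g (‖u₀‖⁻¹ • u₀) := h _ (norm_smul_inv_norm hu₀0)
    _ = ‖u₀‖⁻¹ ^ 2 * g u₀ := hg _ _
    _ ≤ g u₀ := by nlinarith

variable {H E : Type*} [NormedAddCommGroup H] [InnerProductSpace ℝ H] [CompleteSpace H]
  [NormedAddCommGroup E] [NormedSpace ℝ E]

theorem lt_sInf_of_forall_norm_eq_one_lt {T : H →L[ℝ] E} (hT : IsCompactOperator T)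
    {q : E → ℝ} (hq : Continuous q) (hq_smul : ∀ (c : ℝ) w, q (c • w) = c ^ 2 * q w)
    {G : Submodule ℝ H} (hG : IsClosed (G : Set H)) {a : ℝ} (ha : a < 0)
    (h : ∀ u ∈ G, ‖u‖ = 1 → a < q (T u)) :
    a < sInf {y | ∃ u ∈ G, ‖u‖ = 1 ∧ q (T u) = y} := by
  have : CompleteSpace G := hG.completeSpace_coe
  obtain ⟨u₀, hu₀, hmin⟩ := IsCompactOperator.exists_isMinOn_closedBall (T := T ∘L G.subtypeL)
    (hT.comp_clm G.subtypeL) hq zero_le_one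
  have hau₀ : a < q (T u₀) :=
    lt_of_isMinOn_closedBall_of_homogeneous (g := fun v : G => q (T v))
      (fun c v => by simp only [Submodule.coe_smul, map_smul, hq_smul]) hu₀ hmin ha
      fun v hv => h v v.2 (by simpa using hv)
  refine (lt_min hau₀ ha).trans_le (Real.le_sInf ?_ (min_le_right _ _))
  rintro _ ⟨u, hu, hu1, rfl⟩
  exact (min_le_left _ _).trans
    (hmin (a := ⟨u, hu⟩) (by simpa using hu1.le))

end Homogeneous

section WeightedL2

variable {α : Type*} [MeasurableSpace α] {μ : Measure α}

theorem integral_mul_sq_eq_inner_holderL {ρ : α → ℝ} (hρ : MemLp ρ ⊤ μ) (w : Lp ℝ 2 μ) :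
    ∫ x, ρ x * w x ^ 2 ∂μ =
      ⟪(ContinuousLinearMap.mul ℝ ℝ).holderL μ ⊤ 2 2 (hρ.toLp ρ) w, w⟫_ℝ := by
  rw [L2.inner_def]
  refine integral_congr_ae ?_
  filter_upwards [(ContinuousLinearMap.mul ℝ ℝ).coeFn_holder (r := 2) (hρ.toLp ρ) w,
    hρ.coeFn_toLp] with x hx hρx
  simp only [ContinuousLinearMap.holderL_apply_apply, hx, hρx, ContinuousLinearMap.mul_apply',
    RCLike.inner_apply, conj_trivial]
  ring

theorem continuous_integral_mul_sq {ρ : α → ℝ} (hρ : MemLp ρ ⊤ μ) :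
    Continuous fun w : Lp ℝ 2 μ => ∫ x, ρ x * w x ^ 2 ∂μ := by
  simp only [integral_mul_sq_eq_inner_holderL hρ]
  fun_prop

theorem integral_mul_sq_smul (ρ : α → ℝ) (c : ℝ) (w : Lp ℝ 2 μ) :
    ∫ x, ρ x * (c • w) x ^ 2 ∂μ = c ^ 2 * ∫ x, ρ x * w x ^ 2 ∂μ := by
  rw [← integral_const_mul]
  refine integral_congr_ae ?_
  filter_upwards [Lp.coeFn_smul c w] with x hx
  simp only [hx, Pi.smul_apply, smul_eq_mul]
  ring

end WeightedL2

theorem stmt11_general {N : ℕ} (Ω : Set (EuclideanSpace ℝ (Fin N)))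
    (H : Type*) [NormedAddCommGroup H] [InnerProductSpace ℝ H] [CompleteSpace H]
    (ι : H →L[ℝ] Lp ℝ 2 (volume.restrict Ω))
    (hι : IsCompactOperator ι)
    (ρt : EuclideanSpace ℝ (Fin N) → ℝ) (Mb : ℝ)
    (hρtmeas : Measurable ρt)
    (hρt : ∀ᵐ x ∂(volume.restrict Ω), |ρt x| ≤ Mb)
    (G : Submodule ℝ H) (hG : IsClosed (G : Set H))
    (laminv : ℝ) (hneg : laminv < 0)
    (hgt : ∀ u : H, u ∈ G → ‖u‖ = 1 →
      laminv < ∫ x, ρt x * (ι u x) ^ 2 ∂(volume.restrict Ω)) :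
    laminv < sInf {y : ℝ | ∃ u ∈ G, ‖u‖ = 1 ∧
      (∫ x, ρt x * (ι u x) ^ 2 ∂(volume.restrict Ω)) = y} := by
  have hρ : MemLp ρt ⊤ (volume.restrict Ω) :=
    memLp_top_of_bound hρtmeas.aestronglyMeasurable Mb (by simpa using hρt)
  exact lt_sInf_of_forall_norm_eq_one_lt hι (continuous_integral_mul_sq hρ)
    (integral_mul_sq_smul ρt) hG hneg hgt

/-- for a compact embedding `ι : H → L²(Ω)`, a closed subspace `G`
and `λ⁻¹ < 0`, if `λ⁻¹ < ∫ ρ̃ u²` for every unit `u ∈ G`, then the strict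
inequality persists at the infimum. -/
theorem stmt11 {N : ℕ} (Ω : Set (EuclideanSpace ℝ (Fin N)))
    (hΩmeas : MeasurableSet Ω) (hΩ : Bornology.IsBounded Ω)
    (H : Type*) [NormedAddCommGroup H] [InnerProductSpace ℝ H] [CompleteSpace H]
    (ι : H →L[ℝ] Lp ℝ 2 (volume.restrict Ω))
    (hι : IsCompactOperator ι)
    (ρt : EuclideanSpace ℝ (Fin N) → ℝ) (Mb : ℝ)
    (hρtmeas : Measurable ρt)
    (hρt : ∀ᵐ x ∂(volume.restrict Ω), |ρt x| ≤ Mb)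
    (G : Submodule ℝ H) (hG : IsClosed (G : Set H))
    (hGne : ∃ u ∈ G, u ≠ 0)
    (laminv : ℝ) (hneg : laminv < 0)
    (hgt : ∀ u : H, u ∈ G → ‖u‖ = 1 →
      laminv < ∫ x, ρt x * (ι u x) ^ 2 ∂(volume.restrict Ω)) :
    laminv < sInf {y : ℝ | ∃ u ∈ G, ‖u‖ = 1 ∧
      (∫ x, ρt x * (ι u x) ^ 2 ∂(volume.restrict Ω)) = y} :=
  stmt11_general Ω H ι hι ρt Mb hρtmeas hρt G hG laminv hneg hgt
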